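/- Let h : ℝ → ℝ be six times continuously differentiable in a neighborhood of x ∈ ℝ and let s > 0 be fixed. With c(η) = (√(4η + 1) + 1)/(4·√(1 + η)) and η = s·Δx², the exact MQ-RBF reconstruction satisfies c(s·Δx²)·(h̄₀ + h̄₊) = h(x) + ((1/2)·s·h(x) + (1/6)·h''(x))·Δx² + (−(9/8)·s²·h(x) + (1/12)·s·h''(x) + (1/120)·h⁽⁴⁾(x))·Δx⁴ + O(Δx⁶). -/

import Mathlib

open Set Filter Topology Asymptotics intervalIntegral
open scoped Interval

/-!
By Taylor's theorem, `h - T₅ = O((ξ - x)⁶)` for the Taylor polynomial `T₅` of `h` at `x`;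
integrating over the symmetric stencil `[x - Δx, x + Δx]` kills the odd terms, so
`h̄₀ + h̄₊ = 2h + h''Δx²/3 + h⁽⁴⁾Δx⁴/60 + O(Δx⁶)`. Two-sided polynomial bounds on `√(4η + 1)` and
`√(1 + η)` for `0 ≤ η ≤ 1` give `c(η) = 1/2 + η/4 - 9η²/16 + O(η³)`. Multiplying the two truncated
expansions produces the claimed polynomial up to terms of order `Δx⁶`, and both factors are bounded.
-/

section

variable {E : Type*} [NormedAddCommGroup E] [NormedSpace ℝ E]

theorem ContDiffAt.isLittleO_sub_taylor {f : ℝ → E} {x₀ : ℝ} {n : ℕ} (hf : ContDiffAt ℝ n f x₀) :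
    (fun x ↦ f x - ∑ k ∈ Finset.range (n + 1),
        ((k.factorial : ℝ)⁻¹ * (x - x₀) ^ k) • iteratedDeriv k f x₀)
      =o[𝓝 x₀] fun x ↦ (x - x₀) ^ n := by
  obtain ⟨u, hu, hfu⟩ := hf.contDiffOn le_rfl (by simp)
  obtain ⟨ε, hε, hball⟩ := Metric.mem_nhds_iff.mp hu
  have key := taylor_isLittleO (convex_ball x₀ ε) (Metric.mem_ball_self hε) (hfu.mono hball)
  rw [nhdsWithin_eq_nhds.2 (Metric.ball_mem_nhds x₀ hε)] at key
  simpa only [taylor_within_apply,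
    iteratedDerivWithin_of_isOpen Metric.isOpen_ball (Metric.mem_ball_self hε)] using key

theorem ContDiffAt.isBigO_sub_taylor {f : ℝ → E} {x₀ : ℝ} {n : ℕ}
    (hf : ContDiffAt ℝ (n + 1) f x₀) :
    (fun x ↦ f x - ∑ k ∈ Finset.range (n + 1),
        ((k.factorial : ℝ)⁻¹ * (x - x₀) ^ k) • iteratedDeriv k f x₀)
      =O[𝓝 x₀] fun x ↦ (x - x₀) ^ (n + 1) := by
  have hlast : (fun x ↦ ((((n + 1).factorial : ℝ)⁻¹ * (x - x₀) ^ (n + 1)) •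
      iteratedDeriv (n + 1) f x₀)) =O[𝓝 x₀] fun x ↦ (x - x₀) ^ (n + 1) :=
    .of_bound (((n + 1).factorial : ℝ)⁻¹ * ‖iteratedDeriv (n + 1) f x₀‖) <| .of_forall fun x ↦
      by simp only [norm_smul, norm_mul, norm_inv, RCLike.norm_natCast]; exact le_of_eq (by ring)
  have hnext := (ContDiffAt.isLittleO_sub_taylor (n := n + 1) (by exact_mod_cast hf)).isBigO
  refine (hnext.add hlast).congr_left fun x ↦ ?_
  rw [Finset.sum_range_succ]
  abel

lemma abs_sub_le_of_mem_uIcc_sub_add {x d ξ : ℝ} (hξ : ξ ∈ [[x - d, x + d]]) : |ξ - x| ≤ |d| := by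
  rcases mem_uIcc.mp hξ with ⟨h₁, h₂⟩ | ⟨h₁, h₂⟩ <;>
    exact abs_le.mpr ⟨by linarith [neg_abs_le d, le_abs_self d],
      by linarith [neg_abs_le d, le_abs_self d]⟩

theorem isBigO_intervalIntegral_sub_add {g : ℝ → E} {x : ℝ} {n : ℕ}
    (hg : g =O[𝓝 x] fun ξ ↦ (ξ - x) ^ n) :
    (fun d ↦ ∫ ξ in (x - d)..(x + d), g ξ) =O[𝓝 0] fun d ↦ d ^ (n + 1) := by
  obtain ⟨C, hC, hCg⟩ := hg.exists_pos
  obtain ⟨ε, hε, hball⟩ := Metric.eventually_nhds_iff_ball.mp hCg.bound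
  refine IsBigO.of_bound (2 * C) ?_
  filter_upwards [Metric.ball_mem_nhds 0 hε] with d hd
  have hξ : ∀ ξ ∈ Ι (x - d) (x + d), |ξ - x| ≤ |d| :=
    fun ξ hξ ↦ abs_sub_le_of_mem_uIcc_sub_add (uIoc_subset_uIcc hξ)
  have hbound : ∀ ξ ∈ Ι (x - d) (x + d), ‖g ξ‖ ≤ C * |d| ^ n := by
    intro ξ hξ'
    calc ‖g ξ‖ ≤ C * ‖(ξ - x) ^ n‖ := hball ξ (by
        rw [Metric.mem_ball, Real.dist_eq]
        exact (hξ ξ hξ').trans_lt (by simpa using hd))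
      _ ≤ C * |d| ^ n := by
        rw [norm_pow, Real.norm_eq_abs]
        exact mul_le_mul_of_nonneg_left (pow_le_pow_left₀ (abs_nonneg _) (hξ ξ hξ') n) hC.le
  calc ‖∫ ξ in (x - d)..(x + d), g ξ‖ ≤ C * |d| ^ n * |x + d - (x - d)| :=
        norm_integral_le_of_norm_le_const hbound
    _ = 2 * C * ‖d ^ (n + 1)‖ := by
        rw [show x + d - (x - d) = 2 * d by ring, abs_mul, norm_pow, Real.norm_eq_abs]
        norm_num
        ring

end

lemma integral_sub_pow_sub_add (x d : ℝ) (k : ℕ) :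
    ∫ ξ in (x - d)..(x + d), (ξ - x) ^ k = (d ^ (k + 1) - (-d) ^ (k + 1)) / (k + 1) := by
  simp [integral_comp_sub_right (fun ξ ↦ ξ ^ k)]

lemma integral_taylor_five_sub_add (h : ℝ → ℝ) (x d : ℝ) :
    ∫ ξ in (x - d)..(x + d), ∑ k ∈ Finset.range 6,
        ((k.factorial : ℝ)⁻¹ * (ξ - x) ^ k) • iteratedDeriv k h x
      = d * (2 * h x + iteratedDeriv 2 h x * d ^ 2 / 3 + iteratedDeriv 4 h x * d ^ 4 / 60) := by
  rw [integral_finsetSum fun k _ ↦ (by fun_prop : Continuous _).intervalIntegrable _ _]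
  simp only [smul_eq_mul, mul_assoc, integral_const_mul, integral_mul_const,
    integral_sub_pow_sub_add, Finset.sum_range_succ, Finset.sum_range_zero, iteratedDeriv_zero]
  norm_num [Nat.factorial]
  ring

lemma eventually_continuousOn_uIcc_sub_add {E : Type*} [TopologicalSpace E] {f : ℝ → E} {x : ℝ}
    (hf : ∀ᶠ y in 𝓝 x, ContinuousAt f y) : ∀ᶠ d in 𝓝 0, ContinuousOn f [[x - d, x + d]] := by
  obtain ⟨ε, hε, hball⟩ := Metric.eventually_nhds_iff_ball.mp hf
  filter_upwards [Metric.ball_mem_nhds 0 hε] with d hd ξ hξ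
  refine (hball ξ ?_).continuousWithinAt
  rw [Metric.mem_ball, Real.dist_eq]
  exact (abs_sub_le_of_mem_uIcc_sub_add hξ).trans_lt (by simpa using hd)

theorem ContDiffAt.isBigO_cellAverages_add_sub {h : ℝ → ℝ} {x : ℝ} (hh : ContDiffAt ℝ 6 h x) :
    (fun d ↦ (1 / d) * (∫ ξ in (x - d)..x, h ξ) + (1 / d) * (∫ ξ in x..(x + d), h ξ)
        - (2 * h x + iteratedDeriv 2 h x * d ^ 2 / 3 + iteratedDeriv 4 h x * d ^ 4 / 60))
      =O[𝓝[>] 0] fun d ↦ d ^ 6 := by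
  have hcont := eventually_continuousOn_uIcc_sub_add
    ((hh.eventually (by simp)).mono fun y hy ↦ hy.continuousAt)
  have hrem := isBigO_intervalIntegral_sub_add (ContDiffAt.isBigO_sub_taylor (n := 5) hh)
  have hint_rem : (fun d ↦ (∫ ξ in (x - d)..(x + d), h ξ) - d * (2 * h x
      + iteratedDeriv 2 h x * d ^ 2 / 3 + iteratedDeriv 4 h x * d ^ 4 / 60))
      =O[𝓝 0] fun d ↦ d ^ 7 := by
    refine hrem.congr' ?_ .rfl
    filter_upwards [hcont] with d hd
    rw [integral_sub hd.intervalIntegrable ((by fun_prop : Continuous _).intervalIntegrable _ _),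
      integral_taylor_five_sub_add]
  refine ((isBigO_refl (fun d : ℝ ↦ d⁻¹) (𝓝[>] 0)).mul
    (hint_rem.mono nhdsWithin_le_nhds)).congr' ?_ ?_
  · filter_upwards [self_mem_nhdsWithin, nhdsWithin_le_nhds hcont] with d (hd : 0 < d) hcd
    have hx : x ∈ [[x - d, x + d]] := mem_uIcc.2 (.inl ⟨by linarith, by linarith⟩)
    rw [← integral_add_adjacent_intervals (μ := MeasureTheory.volume)
      (hcd.mono (uIcc_subset_uIcc_left hx)).intervalIntegrable
      (hcd.mono (uIcc_subset_uIcc_right hx)).intervalIntegrable]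
    field_simp
  · filter_upwards [self_mem_nhdsWithin] with d (hd : 0 < d)
    field_simp

noncomputable def mqCoeff (η : ℝ) : ℝ := (Real.sqrt (4 * η + 1) + 1) / (4 * Real.sqrt (1 + η))

lemma sqrt_four_mul_add_one_mem_Icc {η : ℝ} (h₀ : 0 ≤ η) (h₁ : η ≤ 1) :
    Real.sqrt (4 * η + 1) ∈ Icc (1 + 2 * η - 2 * η ^ 2) (1 + 2 * η - 2 * η ^ 2 + 4 * η ^ 3) := by
  constructor
  · rw [Real.le_sqrt (by nlinarith) (by linarith)]
    nlinarith [mul_nonneg (pow_nonneg h₀ 3) (show (0:ℝ) ≤ 2 - η by linarith)]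
  · rw [Real.sqrt_le_left (by nlinarith)]
    nlinarith [sq_nonneg (η ^ 2 * (1 - η)), pow_nonneg h₀ 4, pow_nonneg h₀ 5]

lemma sqrt_one_add_mem_Icc {η : ℝ} (h₀ : 0 ≤ η) (h₁ : η ≤ 1) :
    Real.sqrt (1 + η) ∈ Icc (1 + η / 2 - η ^ 2 / 8) (1 + η / 2 - η ^ 2 / 8 + η ^ 3 / 16) := by
  constructor
  · rw [Real.le_sqrt (by nlinarith) (by linarith)]
    nlinarith [mul_nonneg (pow_nonneg h₀ 4) (show (0:ℝ) ≤ 4 - η by linarith)]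
  · rw [Real.sqrt_le_left (by nlinarith)]
    nlinarith [mul_nonneg (pow_nonneg h₀ 4)
      (show (0:ℝ) ≤ 5 / 64 - 1 / 64 * η + 1 / 256 * η ^ 2 by nlinarith), pow_nonneg h₀ 5]

lemma abs_mqCoeff_sub_le {η : ℝ} (h₀ : 0 ≤ η) (h₁ : η ≤ 1) :
    |mqCoeff η - (1 / 2 + η / 4 - 9 / 16 * η ^ 2)| ≤ 2 * η ^ 3 := by
  obtain ⟨haL, haU⟩ := sqrt_four_mul_add_one_mem_Icc h₀ h₁
  obtain ⟨hbL, hbU⟩ := sqrt_one_add_mem_Icc h₀ h₁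
  set a := Real.sqrt (4 * η + 1)
  set b := Real.sqrt (1 + η)
  have hb : 1 ≤ b := by nlinarith
  have hp : 0 ≤ 2 + η - 9 / 4 * η ^ 2 := by nlinarith
  have hnum : |a + 1 - (2 + η - 9 / 4 * η ^ 2) * b| ≤ 8 * η ^ 3 := by
    have := mul_le_mul_of_nonneg_left hbL hp
    have := mul_le_mul_of_nonneg_left hbU hp
    rw [abs_le]
    constructor
    · nlinarith [mul_nonneg (pow_nonneg h₀ 3) (show (0:ℝ) ≤ 1 - η by linarith), pow_nonneg h₀ 5]
    · nlinarith [pow_nonneg h₀ 4]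
  have hb4 : (0:ℝ) < 4 * b := by linarith
  calc |mqCoeff η - (1 / 2 + η / 4 - 9 / 16 * η ^ 2)|
      = |a + 1 - (2 + η - 9 / 4 * η ^ 2) * b| / (4 * b) := by
        rw [← abs_of_pos hb4, ← abs_div, mqCoeff]
        congr 1
        field_simp
        ring
    _ ≤ 8 * η ^ 3 / 4 := by gcongr; linarith
    _ ≤ 2 * η ^ 3 := by linarith

lemma isBigO_mqCoeff_sub :
    (fun η ↦ mqCoeff η - (1 / 2 + η / 4 - 9 / 16 * η ^ 2)) =O[𝓝[≥] 0] fun η ↦ η ^ 3 := by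
  refine IsBigO.of_bound 2 ?_
  filter_upwards [Ico_mem_nhdsGE (zero_lt_one' ℝ)] with η ⟨h₀, h₁⟩
  simpa [abs_of_nonneg h₀] using abs_mqCoeff_sub_le h₀ h₁.le

lemma continuousAt_mqCoeff : ContinuousAt mqCoeff 0 :=
  ContinuousAt.div (by fun_prop) (by fun_prop) (by norm_num)

lemma isBigO_mqCoeff_mul_sq_sub {s : ℝ} (hs : 0 ≤ s) :
    (fun d ↦ mqCoeff (s * d ^ 2) - (1 / 2 + s * d ^ 2 / 4 - 9 / 16 * (s * d ^ 2) ^ 2))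
      =O[𝓝 0] fun d ↦ d ^ 6 := by
  have hη : Tendsto (fun d : ℝ ↦ s * d ^ 2) (𝓝 0) (𝓝[≥] 0) :=
    tendsto_nhdsWithin_iff.mpr
      ⟨by simpa using ((continuous_pow 2).const_mul s).tendsto 0,
        .of_forall fun d ↦ mul_nonneg hs (sq_nonneg d)⟩
  refine (isBigO_mqCoeff_sub.comp_tendsto hη).trans ?_
  exact ((isBigO_refl _ _).const_mul_left (s ^ 3)).congr_left fun d ↦ by
    simp only [Function.comp]; ring

lemma isBigO_truncatedExpansions_mul_sub (s a₀ a₂ a₄ : ℝ) :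
    (fun d : ℝ ↦ (1 / 2 + s * d ^ 2 / 4 - 9 / 16 * (s * d ^ 2) ^ 2)
          * (2 * a₀ + a₂ * d ^ 2 / 3 + a₄ * d ^ 4 / 60)
        - a₀ - ((1 / 2) * s * a₀ + (1 / 6) * a₂) * d ^ 2
        - (-(9 / 8) * s ^ 2 * a₀ + (1 / 12) * s * a₂ + (1 / 120) * a₄) * d ^ 4)
      =O[𝓝 0] fun d ↦ d ^ 6 := by
  have hbdd := ((by fun_prop : Continuous fun d : ℝ ↦
    s * a₄ / 240 - 3 * s ^ 2 * a₂ / 16 - 3 * s ^ 2 * a₄ / 320 * d ^ 2).tendsto 0).isBigO_one ℝ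
  refine ((isBigO_refl (fun d : ℝ ↦ d ^ 6) _).mul hbdd).congr (fun d ↦ by ring) (fun d ↦ mul_one _)

lemma exists_bound_of_isBigO_nhdsGT {f : ℝ → ℝ} {m : ℕ} (hf : f =O[𝓝[>] 0] fun d ↦ d ^ m) :
    ∃ C > 0, ∃ d₀ > 0, ∀ d : ℝ, 0 < d → d < d₀ → |f d| ≤ C * d ^ m := by
  obtain ⟨C, hC, hCf⟩ := hf.exists_pos
  obtain ⟨d₀, hd₀, hbound⟩ := (nhdsGT_basis (0 : ℝ)).eventually_iff.mp hCf.bound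
  refine ⟨C, hC, d₀, hd₀, fun d hd hdd₀ ↦ ?_⟩
  simpa [abs_of_pos hd] using hbound ⟨hd, hdd₀⟩

/-- Expansion of the exact-coefficient k = 2 MQ-RBF reconstruction:
`c(sΔx²)(h̄₀ + h̄₊) = h(x) + ((1/2)s·h + (1/6)h'')Δx²
  + (−(9/8)s²h + (1/12)s·h'' + (1/120)h⁽⁴⁾)Δx⁴ + O(Δx⁶)`. -/
theorem stmt_6 (h : ℝ → ℝ) (x : ℝ) (hh : ContDiffAt ℝ 6 h x) (s : ℝ) (hs : 0 < s) :
    ∃ C > 0, ∃ d₀ > 0, ∀ d : ℝ, 0 < d → d < d₀ →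
      |(Real.sqrt (4 * (s * d ^ 2) + 1) + 1) / (4 * Real.sqrt (1 + s * d ^ 2))
            * ((1 / d) * (∫ ξ in (x - d)..x, h ξ) + (1 / d) * ∫ ξ in x..(x + d), h ξ)
          - h x
          - ((1 / 2) * s * h x + (1 / 6) * iteratedDeriv 2 h x) * d ^ 2
          - (-(9 / 8) * s ^ 2 * h x + (1 / 12) * s * iteratedDeriv 2 h x
              + (1 / 120) * iteratedDeriv 4 h x) * d ^ 4|
        ≤ C * d ^ 6 := by
  have hcoeff := (isBigO_mqCoeff_mul_sq_sub hs.le).mono (nhdsWithin_le_nhds (s := Ioi 0))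
  have hcoeff_bdd : (fun d ↦ mqCoeff (s * d ^ 2)) =O[𝓝[>] 0] fun _ ↦ (1 : ℝ) :=
    ((continuousAt_mqCoeff.tendsto.comp (((continuous_pow 2).const_mul s).tendsto' 0 0
      (by simp))).mono_left nhdsWithin_le_nhds).isBigO_one ℝ
  have havg := hh.isBigO_cellAverages_add_sub
  have havg_bdd : (fun d ↦ 2 * h x + iteratedDeriv 2 h x * d ^ 2 / 3
      + iteratedDeriv 4 h x * d ^ 4 / 60) =O[𝓝[>] 0] fun _ ↦ (1 : ℝ) :=
    (((by fun_prop : Continuous fun d : ℝ ↦ 2 * h x + iteratedDeriv 2 h x * d ^ 2 / 3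
      + iteratedDeriv 4 h x * d ^ 4 / 60).tendsto 0).mono_left nhdsWithin_le_nhds).isBigO_one ℝ
  have hpoly := (isBigO_truncatedExpansions_mul_sub s (h x) (iteratedDeriv 2 h x)
    (iteratedDeriv 4 h x)).mono (nhdsWithin_le_nhds (s := Ioi 0))
  refine exists_bound_of_isBigO_nhdsGT ((((hcoeff_bdd.mul havg).congr_right fun d ↦ one_mul _).add
    (((hcoeff.mul havg_bdd).congr_right fun d ↦ mul_one _).add hpoly)).congr_left fun d ↦ ?_)
  simp only [mqCoeff]
  ring
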